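/- In a globally hyperbolic poset, every filtered set with a lower bound has an infimum. -/

import Mathlib

open Set

/-- `a` is way below `x`. -/
def wayBelow {α : Type*} [Preorder α] (a x : α) : Prop :=
  ∀ S : Set α, S.Nonempty → DirectedOn (· ≤ ·) S → ∀ d, IsLUB S d → x ≤ d →
    ∃ s ∈ S, a ≤ s

/-- A poset is continuous if every element is the supremum of a directed set
of elements way below it. -/
def ContinuousPoset (α : Type*) [Preorder α] : Prop :=
  ∀ x : α, ∃ S : Set α, S ⊆ {a | wayBelow a x} ∧ S.Nonempty ∧
    DirectedOn (· ≤ ·) S ∧ IsLUB S x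

/-- A basis for a continuous poset. -/
def PosetBasis {α : Type*} [Preorder α] (B : Set α) : Prop :=
  ∀ x : α, ∃ S : Set α, S ⊆ B ∩ {a | wayBelow a x} ∧ S.Nonempty ∧
    DirectedOn (· ≤ ·) S ∧ IsLUB S x

/-- Scott open sets: upper sets inaccessible by directed suprema. -/
def ScottOpen {α : Type*} [Preorder α] (U : Set α) : Prop :=
  IsUpperSet U ∧ ∀ S : Set α, S.Nonempty → DirectedOn (· ≤ ·) S → ∀ d, IsLUB S d →
    d ∈ U → (S ∩ U).Nonempty

/-- The Scott topology. -/
def scottTop (α : Type*) [Preorder α] : TopologicalSpace α :=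
  TopologicalSpace.generateFrom {U | ScottOpen U}

/-- A bicontinuous poset. -/
def Bicontinuous (α : Type*) [Preorder α] : Prop :=
  ContinuousPoset α ∧
  (∀ x y : α, wayBelow x y ↔
    ∀ S : Set α, S.Nonempty → DirectedOn (· ≥ ·) S → ∀ i, IsGLB S i → i ≤ x →
      ∃ s ∈ S, s ≤ y) ∧
  (∀ x : α, DirectedOn (· ≥ ·) {y | wayBelow x y} ∧ IsGLB {y | wayBelow x y} x)

/-- The basic open intervals `(a,b) = {x | a ≪ x ≪ b}`. -/
def intervalBasis (α : Type*) [Preorder α] : Set (Set α) :=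
  {s | ∃ a b : α, s = {x | wayBelow a x ∧ wayBelow x b}}

/-- The interval topology, generated by the sets `(a,b)`. -/
def intervalTop (α : Type*) [Preorder α] : TopologicalSpace α :=
  TopologicalSpace.generateFrom (intervalBasis α)

/-- A globally hyperbolic poset: bicontinuous, with compact closed intervals. -/
def GloballyHyperbolic (α : Type*) [PartialOrder α] : Prop :=
  Bicontinuous α ∧ ∀ a b : α, @IsCompact α (intervalTop α) (Set.Icc a b)

/-- The poset of closed intervals `[a,b]`, `a ≤ b`, under reverse inclusion. -/
def IX (α : Type*) [PartialOrder α] := {p : α × α // p.1 ≤ p.2}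

instance IX.instPartialOrder {α : Type*} [PartialOrder α] : PartialOrder (IX α) where
  le x y := x.1.1 ≤ y.1.1 ∧ y.1.2 ≤ x.1.2
  le_refl x := ⟨le_refl _, le_refl _⟩
  le_trans x y z h1 h2 := ⟨h1.1.trans h2.1, h2.2.trans h1.2⟩
  le_antisymm x y h1 h2 :=
    Subtype.ext (Prod.ext_iff.mpr ⟨le_antisymm h1.1 h2.1, le_antisymm h2.2 h1.2⟩)

section Rel

variable {β : Type*}

/-- Directedness with respect to an arbitrary relation. -/
def relDirectedOn (r : β → β → Prop) (S : Set β) : Prop :=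
  ∀ x ∈ S, ∀ y ∈ S, ∃ z ∈ S, r x z ∧ r y z

/-- Least upper bound with respect to an arbitrary relation. -/
def relIsLUB (r : β → β → Prop) (S : Set β) (d : β) : Prop :=
  (∀ s ∈ S, r s d) ∧ ∀ u, (∀ s ∈ S, r s u) → r d u

/-- The way-below relation with respect to an arbitrary relation. -/
def relWayBelow (r : β → β → Prop) (a x : β) : Prop :=
  ∀ S : Set β, S.Nonempty → relDirectedOn r S → ∀ d, relIsLUB r S d → r x d →
    ∃ s ∈ S, r a s

/-- An abstract basis: a transitive relation, interpolative from the `-` direction. -/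
def AbstractBasis (r : β → β → Prop) : Prop :=
  Transitive r ∧ ∀ (F : Finset β) (x : β), (∀ y ∈ F, r y x) →
    ∃ z, (∀ y ∈ F, r y z) ∧ r z x

/-- Interpolation in the `+` direction. -/
def PlusInterpolative (r : β → β → Prop) : Prop :=
  ∀ (F : Finset β) (x : β), (∀ y ∈ F, r x y) → ∃ z, r x z ∧ (∀ y ∈ F, r z y)

/-- An ideal: a nonempty directed lower set. -/
def IsIdeal (r : β → β → Prop) (I : Set β) : Prop :=
  I.Nonempty ∧ (∀ x y, r x y → y ∈ I → x ∈ I) ∧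
    ∀ x ∈ I, ∀ y ∈ I, ∃ z ∈ I, r x z ∧ r y z

/-- The ideal completion: ideals ordered by inclusion. -/
def IdealCompletion (r : β → β → Prop) := {I : Set β // IsIdeal r I}

instance IdealCompletion.instPartialOrder {β : Type*} (r : β → β → Prop) :
    PartialOrder (IdealCompletion r) where
  le I J := I.1 ⊆ J.1
  le_refl I := subset_rfl
  le_trans I J K h1 h2 := Set.Subset.trans h1 h2
  le_antisymm I J h1 h2 := Subtype.ext (Set.Subset.antisymm h1 h2)

end Rel

/-- The order on maximal elements induced by interval endpoints. -/
def maxLe {α : Type*} (left right : α → α) (a b : α) : Prop :=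
  ∃ x, left x = a ∧ right x = b

/-- An interval poset. -/
structure IntervalPoset (α : Type*) [PartialOrder α] where
  left : α → α
  right : α → α
  left_max : ∀ x, IsMax (left x)
  right_max : ∀ x, IsMax (right x)
  glb : ∀ x, IsGLB {left x, right x} x
  glue : ∀ x y, right x = left y →
    ∃ z, IsGLB {x, y} z ∧ left z = left x ∧ right z = right y
  sub_left : ∀ x p, IsMax p → x ≤ p →
    ∃ z, IsGLB {left x, p} z ∧ left z = left x ∧ right z = p
  sub_right : ∀ x p, IsMax p → x ≤ p →
    ∃ z, IsGLB {p, right x} z ∧ left z = p ∧ right z = right x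

/-- An interval domain. -/
structure IntervalDomain (α : Type*) [PartialOrder α] extends IntervalPoset α where
  dcpo : ∀ S : Set α, S.Nonempty → DirectedOn (· ≤ ·) S → ∃ d, IsLUB S d
  cont : ContinuousPoset α
  ax1 : ∀ x p, IsMax p → wayBelow x p →
    (∀ z, IsGLB {left x, p} z → ∃ u, wayBelow z u) ∧
    (∀ z, IsGLB {p, right x} z → ∃ u, wayBelow z u)
  ax2b : ∀ x : α, (∃ u, wayBelow x u) ↔
    (∀ y, left y = left x → y ≤ x →
      relWayBelow (fun u v => u ≤ v ∧ right u = right y ∧ right v = right y) y (right y))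
  ax2c : ∀ x : α, (∃ u, wayBelow x u) ↔
    (∀ y, right y = right x → y ≤ x →
      relWayBelow (fun u v => u ≤ v ∧ left u = left y ∧ left v = left y) y (left y))
  ax3a : ∀ (p : α) (S : Set α), S.Nonempty → S ⊆ {z | left z = p} →
    DirectedOn (· ≤ ·) S → ∀ u, IsLUB S u →
      left u = p ∧ ∀ (q : α) (T : Set α), T.Nonempty → T ⊆ {z | left z = q} →
        DirectedOn (· ≤ ·) T → ∀ v, IsLUB T v → right '' T = right '' S →
          right u = right v
  ax3b : ∀ (q : α) (S : Set α), S.Nonempty → S ⊆ {z | right z = q} →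
    DirectedOn (· ≤ ·) S → ∀ u, IsLUB S u →
      right u = q ∧ ∀ (p : α) (T : Set α), T.Nonempty → T ⊆ {z | right z = p} →
        DirectedOn (· ≤ ·) T → ∀ v, IsLUB T v → left '' T = left '' S →
          left u = left v
  ax4 : ∀ x : α, @IsCompact α (scottTop α) ({y | x ≤ y} ∩ {y | IsMax y})

/-! The closed interval `[b, s]`, `s ∈ S`, is compact and contains every element of `S` below `s`,
so the filter of tails of the filtered set `S` has a cluster point `d`. By (dual) continuity, the
principal down-sets and up-sets are closed in the interval topology, so `d` is below every element
of `S` and above every lower bound of `S`. -/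

open Topology Filter

section WayBelow

variable {α : Type*} [Preorder α]

lemma wayBelow.le {a x : α} (h : wayBelow a x) : a ≤ x := by
  obtain ⟨s, rfl, has⟩ :=
    h {x} (singleton_nonempty x) (directedOn_singleton x) x isLUB_singleton le_rfl
  exact has

lemma ContinuousPoset.exists_wayBelow (hc : ContinuousPoset α) (x : α) : ∃ a, wayBelow a x := by
  obtain ⟨S, hsub, ⟨a, ha⟩, -, -⟩ := hc x
  exact ⟨a, hsub ha⟩

lemma ContinuousPoset.exists_wayBelow_not_le (hc : ContinuousPoset α) {x s : α} (hxs : ¬x ≤ s) :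
    ∃ a, wayBelow a x ∧ ¬a ≤ s := by
  obtain ⟨S, hsub, -, -, hlub⟩ := hc x
  by_contra! hcon
  exact hxs (hlub.2 fun a ha => hcon a (hsub ha))

lemma Bicontinuous.exists_wayAbove (hb : Bicontinuous α) (x : α) : ∃ y, wayBelow x y := by
  rcases eq_empty_or_nonempty {y | wayBelow x y} with hempty | hne
  · -- `x` is then a top element, and a top element is way below itself
    have htop : ∀ y : α, y ≤ x := fun y => (hb.2.2 x).2.2 (by simp [hempty])
    refine ⟨x, (hb.2.1 x x).2 ?_⟩
    rintro S ⟨s, hs⟩ - - - -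
    exact ⟨s, hs, htop s⟩
  · exact hne

lemma Bicontinuous.exists_wayAbove_not_ge (hb : Bicontinuous α) {x c : α} (hcx : ¬c ≤ x) :
    ∃ y, wayBelow x y ∧ ¬c ≤ y := by
  by_contra! hcon
  exact hcx ((hb.2.2 x).2.2 fun y hy => hcon y hy)

end WayBelow

section IntervalTopology

variable {α : Type*} [Preorder α]

lemma isOpen_intervalTop_wayBelow_wayBelow (a b : α) :
    IsOpen[intervalTop α] {x | wayBelow a x ∧ wayBelow x b} :=
  TopologicalSpace.isOpen_generateFrom_of_mem ⟨a, b, rfl⟩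

lemma Bicontinuous.closedIicTopology (hb : Bicontinuous α) :
    @ClosedIicTopology α (intervalTop α) _ := by
  let := intervalTop α
  refine ⟨fun s => isOpen_compl_iff.1 (isOpen_iff_forall_mem_open.2 fun x hxs => ?_)⟩
  obtain ⟨a, hax, has⟩ := hb.1.exists_wayBelow_not_le hxs
  obtain ⟨y, hxy⟩ := hb.exists_wayAbove x
  exact ⟨{z | wayBelow a z ∧ wayBelow z y}, fun z hz hzs => has (hz.1.le.trans hzs),
    isOpen_intervalTop_wayBelow_wayBelow a y, hax, hxy⟩

lemma Bicontinuous.closedIciTopology (hb : Bicontinuous α) :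
    @ClosedIciTopology α (intervalTop α) _ := by
  let := intervalTop α
  refine ⟨fun c => isOpen_compl_iff.1 (isOpen_iff_forall_mem_open.2 fun x hcx => ?_)⟩
  obtain ⟨y, hxy, hcy⟩ := hb.exists_wayAbove_not_ge hcx
  obtain ⟨a, hax⟩ := hb.1.exists_wayBelow x
  exact ⟨{z | wayBelow a z ∧ wayBelow z y}, fun z hz hcz => hcy (hcz.trans hz.2.le),
    isOpen_intervalTop_wayBelow_wayBelow a y, hax, hxy⟩

end IntervalTopology

section ClusterPoint

variable {α : Type*} [Preorder α] [TopologicalSpace α] [ClosedIicTopology α] [ClosedIciTopology α]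

lemma isGLB_of_mapClusterPt_atBot {S : Set α} {d : α}
    (hd : MapClusterPt d atBot ((↑) : S → α)) : IsGLB S d :=
  ⟨fun s hs => isClosed_Iic.mem_of_mapClusterPt hd (Iic_mem_atBot (⟨s, hs⟩ : S)),
    fun _ hc => isClosed_Ici.mem_of_mapClusterPt hd (Eventually.of_forall fun t => hc t.2)⟩

lemma DirectedOn.exists_isGLB_of_isCompact_Icc {S : Set α} (hS : DirectedOn (· ≥ ·) S)
    {b s : α} (hs : s ∈ S) (hb : b ∈ lowerBounds S) (hcpt : IsCompact (Icc b s)) :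
    ∃ d, IsGLB S d := by
  have := hS.isCodirectedOrder
  have : Nonempty S := ⟨⟨s, hs⟩⟩
  have htail : map ((↑) : S → α) atBot ≤ 𝓟 (Icc b s) := by
    rw [le_principal_iff, mem_map]
    filter_upwards [Iic_mem_atBot ⟨s, hs⟩] with t ht using ⟨hb t.2, ht⟩
  obtain ⟨d, -, hd⟩ := hcpt.exists_mapClusterPt htail
  exact ⟨d, isGLB_of_mapClusterPt_atBot hd⟩

end ClusterPoint

/-- in a globally hyperbolic poset, every filtered set with a lower
bound has an infimum. -/
theorem filtered_bounded_has_inf {α : Type*} [PartialOrder α]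
    (h : GloballyHyperbolic α) (S : Set α) (hne : S.Nonempty)
    (hfil : DirectedOn (· ≥ ·) S) (b : α) (hb : b ∈ lowerBounds S) :
    ∃ d : α, IsGLB S d := by
  let := intervalTop α
  have := h.1.closedIicTopology
  have := h.1.closedIciTopology
  obtain ⟨s, hs⟩ := hne
  exact hfil.exists_isGLB_of_isCompact_Icc hs hb (h.2 b s)
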